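/- Let F be a field of characteristic 0 (or sufficient size), and t, l nonnegative integers with t + l ≥ 1. Suppose (u_i)_{i≥0} is a sequence in F satisfying Σ_{j=0}^{t+l-1} C(t+l-1, j) u_{i+t+l-1-j} = (-1)^i C(i, l) · c for all i ≥ 0, where c ∈ F. Then there exists a polynomial p over F of degree at most t + 2l - 1 such that u_i = (-1)^i p(i) for all i ≥ 0. -/
import Mathlib

open Finset Function Polynomial

private lemma fd_iter_zero (F : Type*) [Field F] (m : ℕ) :
    (fwdDiff (1:ℕ))^[m] (fun _ : ℕ => (0:F)) = fun _ => 0 := by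
  induction m with
  | zero => rfl
  | succ m ih => rw [Function.iterate_succ_apply, show fwdDiff (1:ℕ) (fun _ : ℕ => (0:F)) = fun _ => 0 from funext fun _ => sub_self 0, ih]

private lemma fd_iter_choose (F : Type*) [Field F] (l : ℕ) :
    (fwdDiff (1:ℕ))^[l+1] (fun i : ℕ => (i.choose l : F)) = fun _ => 0 := by
  induction l with
  | zero =>
      simp only [Nat.choose_zero_right, Nat.cast_one]
      rw [Function.iterate_one]
      exact funext fun _ => sub_self 1
  | succ l ih =>
      rw [Function.iterate_succ_apply]
      have : fwdDiff (1:ℕ) (fun i : ℕ => (i.choose (l+1) : F)) =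
          fun i : ℕ => (i.choose l : F) := by
        funext i
        simp only [fwdDiff, Nat.choose_succ_succ' i l, Nat.cast_add]
        ring
      rw [this, ih]

/-- A sequence satisfying the alternating inhomogeneous recursion
`Σ_j C(t+l-1,j) u_{i+t+l-1-j} = (-1)^i C(i,l) c` has the form `u i = (-1)^i p(i)`
with `deg p ≤ t + 2l - 1`. -/
theorem stmt_5 (F : Type*) [Field F] [CharZero F] (t l : ℕ) (htl : 1 ≤ t + l)
    (c : F) (u : ℕ → F)
    (hrec : ∀ i : ℕ,
      ∑ j ∈ Finset.range (t + l), ((t + l - 1).choose j : F) *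
          u (i + (t + l - 1) - j) = (-1 : F) ^ i * (i.choose l : F) * c) :
    ∃ p : Polynomial F, p.degree < (t + 2 * l : ℕ) ∧
      ∀ i : ℕ, u i = (-1 : F) ^ i * p.eval (i : F) := by
  set n := t + l with hn
  set v : ℕ → F := fun i => (-1 : F) ^ i * u i with hv
  set d := t + 2 * l with hd
  -- Step A: (n-1)-th forward difference of v
  have stepA : (fwdDiff (1:ℕ))^[n-1] v =
      fun i : ℕ => ((-1:F)^(n-1) * c) * (i.choose l : F) := by
    funext i
    rw [fwdDiff_iter_eq_sum_shift]
    have key : ∑ j ∈ Finset.range n, ((n-1).choose j : F) * u (i + j)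
        = (-1 : F) ^ i * (i.choose l : F) * c := by
      rw [← hrec i, ← Finset.sum_range_reflect]
      refine Finset.sum_congr rfl fun j hj => ?_
      rw [Finset.mem_range] at hj
      have hj' : j ≤ n - 1 := by omega
      rw [Nat.choose_symm hj', show i + (n - 1 - j) = i + (n - 1) - j from by omega]
    have hrange : n - 1 + 1 = n := by omega
    rw [hrange]
    have : ∀ k ∈ Finset.range n,
        ((-1 : ℤ) ^ (n - 1 - k) * ((n-1).choose k : ℤ)) • v (i + k • 1)
          = (-1:F)^(n-1+i) * (((n-1).choose k : F) * u (i + k)) := by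
      intro k hk
      rw [Finset.mem_range] at hk
      have hk' : k ≤ n - 1 := by omega
      have hik : i + k • 1 = i + k := by simp
      rw [hik, zsmul_eq_mul]
      push_cast
      simp only [hv]
      have hsgn : ((-1:F) ^ (n - 1 - k)) * ((-1:F) ^ (i + k)) = (-1:F)^(n-1+i) := by
        rw [← pow_add]
        congr 1
        omega
      rw [show ((-1:F) ^ (n - 1 - k) * ((n-1).choose k : F)) * ((-1:F) ^ (i + k) * u (i + k))
          = ((-1:F) ^ (n - 1 - k) * (-1:F) ^ (i + k)) * (((n-1).choose k : F) * u (i + k)) from by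
        ring, hsgn]
    rw [Finset.sum_congr rfl this, ← Finset.mul_sum, key]
    have : (-1:F)^(n-1+i) * ((-1:F)^i) = (-1:F)^(n-1) := by
      rw [← pow_add, show n - 1 + i + i = n - 1 + 2*i by omega, pow_add]
      simp [pow_mul]
    calc (-1:F)^(n-1+i) * ((-1 : F) ^ i * (i.choose l : F) * c)
        = ((-1:F)^(n-1+i) * (-1:F)^i) * ((i.choose l : F) * c) := by ring
      _ = (-1:F)^(n-1) * c * (i.choose l : F) := by rw [this]; ring
  -- Step B: d-th forward difference of v is zero
  have stepB : (fwdDiff (1:ℕ))^[d] v = fun _ => 0 := by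
    have hdsum : d = (l + 1) + (n - 1) := by omega
    rw [hdsum, Function.iterate_add_apply, stepA]
    have : (fun i : ℕ => ((-1:F)^(n-1) * c) * (i.choose l : F))
        = ((-1:F)^(n-1) * c) • (fun i : ℕ => (i.choose l : F)) := by
      funext i; simp [smul_eq_mul]
    rw [this, fwdDiff_iter_const_smul, fd_iter_choose]
    funext i; simp
  -- iterated differences at 0 vanish beyond d
  have hvanish : ∀ k, d ≤ k → (fwdDiff (1:ℕ))^[k] v 0 = 0 := by
    intro k hk
    have : k = (k - d) + d := by omega
    rw [this, Function.iterate_add_apply, stepB, fd_iter_zero]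
  -- Newton: v i = Σ_{k<d} C(i,k) * Δ^k v 0
  have newton : ∀ i : ℕ, v i = ∑ k ∈ Finset.range d,
      (i.choose k : F) * (fwdDiff (1:ℕ))^[k] v 0 := by
    intro i
    have h1 := shift_eq_sum_fwdDiff_iter (1:ℕ) v i 0
    simp only [zero_add, smul_eq_mul, mul_one] at h1
    have h1' : v i = ∑ k ∈ Finset.range (i+1),
        (i.choose k : F) * (fwdDiff (1:ℕ))^[k] v 0 := by
      rw [h1]
      refine Finset.sum_congr rfl fun k _ => ?_
      rw [nsmul_eq_mul]
    rw [h1']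
    have hsub1 : ∑ k ∈ Finset.range (i+1), (i.choose k : F) * (fwdDiff (1:ℕ))^[k] v 0
        = ∑ k ∈ Finset.range (i+1+d), (i.choose k : F) * (fwdDiff (1:ℕ))^[k] v 0 := by
      refine (Finset.sum_subset (Finset.range_subset_range.2 (by omega)) fun k _ hk => ?_)
      rw [Finset.mem_range, not_lt] at hk
      rw [Nat.choose_eq_zero_of_lt (by omega), Nat.cast_zero, zero_mul]
    have hsub2 : ∑ k ∈ Finset.range d, (i.choose k : F) * (fwdDiff (1:ℕ))^[k] v 0
        = ∑ k ∈ Finset.range (i+1+d), (i.choose k : F) * (fwdDiff (1:ℕ))^[k] v 0 := by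
      refine (Finset.sum_subset (Finset.range_subset_range.2 (by omega)) fun k _ hk => ?_)
      rw [Finset.mem_range, not_lt] at hk
      rw [hvanish k (by omega), mul_zero]
    rw [hsub1, ← hsub2]
  -- define the polynomial
  set p : Polynomial F := ∑ k ∈ Finset.range d,
      Polynomial.C ((fwdDiff (1:ℕ))^[k] v 0 / (k.factorial : F)) * descPochhammer F k with hp
  refine ⟨p, ?_, ?_⟩
  · refine lt_of_le_of_lt (Polynomial.degree_sum_le _ _) ?_
    rw [Finset.sup_lt_iff (by exact_mod_cast WithBot.bot_lt_coe d)]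
    intro k hk
    rw [Finset.mem_range] at hk
    have h2 : (descPochhammer F k).degree ≤ (k : WithBot ℕ) := by
      rw [show (k : WithBot ℕ) = ((descPochhammer F k).natDegree : WithBot ℕ) from by rw [descPochhammer_natDegree F k]]
      exact Polynomial.degree_le_natDegree
    refine lt_of_le_of_lt (Polynomial.degree_mul_le _ _)
      (lt_of_le_of_lt (add_le_add Polynomial.degree_C_le h2) ?_)
    rw [zero_add]
    exact_mod_cast hk
  · intro i
    have hev : p.eval (i : F) = ∑ k ∈ Finset.range d,
        (i.choose k : F) * (fwdDiff (1:ℕ))^[k] v 0 := by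
      rw [hp, Polynomial.eval_finset_sum]
      refine Finset.sum_congr rfl fun k _ => ?_
      rw [Polynomial.eval_mul, Polynomial.eval_C,
        descPochhammer_eval_eq_descFactorial,
        Nat.descFactorial_eq_factorial_mul_choose]
      have hfac : (k.factorial : F) ≠ 0 := Nat.cast_ne_zero.2 k.factorial_ne_zero
      push_cast
      field_simp
    rw [hev, ← newton i]
    simp only [hv]
    rw [← mul_assoc, ← pow_add, show i + i = 2*i by omega, pow_mul]
    simp
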